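/- Let f : ℝ^d → ℝ be nonnegative measurable with f(t,·) integrable, τ a bounded measurable nonnegative function with sup ‖Dτ‖ ≤ C k_n on B_δ, and suppose ∫ ‖t‖ f_n(t) dt / ∫ f_n(t) dt ≤ M for all n where f_n(t) = f̃(s_obs + ε_n ν | θ₀ + a_n⁻¹ t). Then φ₁{τ; n} := ∫|τ(θ₀+a_n⁻¹t) − τ(θ₀)| f_n(t) dt / ∫ τ(θ₀+a_n⁻¹t) f_n(t) dt satisfies φ₁{τ; n} ≤ (k_n/a_n) · C · M · φ₂{τ; n}/τ(θ₀), where φ₂{τ; n} = τ(θ₀)∫f_n / ∫τ(θ₀+a_n⁻¹t)f_n. In particular, if k_n = o(a_n) and φ₂{τ; n} is bounded, then φ₁{τ; n} → 0. -/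

import Mathlib

open MeasureTheory Metric Filter Topology

theorem stmt_15 {p : ℕ} (τ : (Fin p → ℝ) → ℝ) (θ₀ : Fin p → ℝ) (δ : ℝ) (hδ : 0 < δ)
    (hτ_nonneg : ∀ θ, 0 ≤ τ θ) (hτ_meas : Measurable τ)
    (hτ_bdd : ∃ B : ℝ, ∀ θ, τ θ ≤ B) (hτ₀ : 0 < τ θ₀)
    (hτ_diff : ContDiff ℝ 1 τ)
    (a k : ℕ → ℝ) (ha_pos : ∀ n, 0 < a n) (hk_pos : ∀ n, 0 < k n)
    (C M : ℝ) (hC : 0 < C) (hM : 0 < M)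
    (hgrad : ∀ n, ∀ θ ∈ closedBall θ₀ δ, ‖fderiv ℝ τ θ‖ ≤ C * k n)
    (f : ℕ → (Fin p → ℝ) → ℝ) (hf_nonneg : ∀ n t, 0 ≤ f n t)
    (hf_int : ∀ n, IntegrableOn (f n)
      {t : Fin p → ℝ | θ₀ + (a n)⁻¹ • t ∈ closedBall θ₀ δ})
    (hf_mom : ∀ n, IntegrableOn (fun t => ‖t‖ * f n t)
      {t : Fin p → ℝ | θ₀ + (a n)⁻¹ • t ∈ closedBall θ₀ δ})
    (hden_pos : ∀ n,
      0 < ∫ t in {t : Fin p → ℝ | θ₀ + (a n)⁻¹ • t ∈ closedBall θ₀ δ},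
        τ (θ₀ + (a n)⁻¹ • t) * f n t)
    (hmom : ∀ n,
      (∫ t in {t : Fin p → ℝ | θ₀ + (a n)⁻¹ • t ∈ closedBall θ₀ δ}, ‖t‖ * f n t) /
        (∫ t in {t : Fin p → ℝ | θ₀ + (a n)⁻¹ • t ∈ closedBall θ₀ δ}, f n t) ≤ M) :
    (∀ n,
      (∫ t in {t : Fin p → ℝ | θ₀ + (a n)⁻¹ • t ∈ closedBall θ₀ δ},
          |τ (θ₀ + (a n)⁻¹ • t) - τ θ₀| * f n t) /
        (∫ t in {t : Fin p → ℝ | θ₀ + (a n)⁻¹ • t ∈ closedBall θ₀ δ},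
          τ (θ₀ + (a n)⁻¹ • t) * f n t) ≤
      (k n / a n) * C * M *
        ((τ θ₀ * ∫ t in {t : Fin p → ℝ | θ₀ + (a n)⁻¹ • t ∈ closedBall θ₀ δ}, f n t) /
          (∫ t in {t : Fin p → ℝ | θ₀ + (a n)⁻¹ • t ∈ closedBall θ₀ δ},
            τ (θ₀ + (a n)⁻¹ • t) * f n t)) / τ θ₀) ∧
    ((Tendsto (fun n => k n / a n) atTop (𝓝 0)) →
      (∃ M₂ : ℝ, ∀ n,
        (τ θ₀ * ∫ t in {t : Fin p → ℝ | θ₀ + (a n)⁻¹ • t ∈ closedBall θ₀ δ}, f n t) /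
          (∫ t in {t : Fin p → ℝ | θ₀ + (a n)⁻¹ • t ∈ closedBall θ₀ δ},
            τ (θ₀ + (a n)⁻¹ • t) * f n t) ≤ M₂) →
      Tendsto (fun n =>
        (∫ t in {t : Fin p → ℝ | θ₀ + (a n)⁻¹ • t ∈ closedBall θ₀ δ},
            |τ (θ₀ + (a n)⁻¹ • t) - τ θ₀| * f n t) /
          (∫ t in {t : Fin p → ℝ | θ₀ + (a n)⁻¹ • t ∈ closedBall θ₀ δ},
            τ (θ₀ + (a n)⁻¹ • t) * f n t)) atTop (𝓝 0)) := by

  have hτ0ne : τ θ₀ ≠ 0 := ne_of_gt hτ₀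
  set S : ℕ → Set (Fin p → ℝ) :=
    fun n => {t | θ₀ + (a n)⁻¹ • t ∈ closedBall θ₀ δ} with hS
  have hSmeas : ∀ n, MeasurableSet (S n) := by
    intro n
    have hc : Continuous fun t : Fin p → ℝ => θ₀ + (a n)⁻¹ • t :=
      continuous_const.add (continuous_const_smul (a n)⁻¹)
    exact (IsClosed.preimage hc Metric.isClosed_closedBall).measurableSet
  have hτ_cont : Continuous τ := hτ_diff.continuous
  -- pointwise bound
  have hpt : ∀ n, ∀ t ∈ S n,
      |τ (θ₀ + (a n)⁻¹ • t) - τ θ₀| * f n t ≤ (C * k n / a n) * (‖t‖ * f n t) := by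
    intro n t ht
    have hθ : θ₀ + (a n)⁻¹ • t ∈ closedBall θ₀ δ := ht
    have hθ0 : θ₀ ∈ closedBall θ₀ δ := mem_closedBall_self hδ.le
    have hmv := (convex_closedBall θ₀ δ).norm_image_sub_le_of_norm_fderiv_le
      (fun x _ => (hτ_diff.differentiable one_ne_zero).differentiableAt)
      (hgrad n) hθ0 hθ
    rw [Real.norm_eq_abs, add_sub_cancel_left, norm_smul, norm_inv,
      Real.norm_eq_abs, abs_of_pos (ha_pos n)] at hmv
    have hfnn := hf_nonneg n t
    have h2 := mul_le_mul_of_nonneg_right hmv hfnn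
    have han := (ha_pos n).ne'
    calc |τ (θ₀ + (a n)⁻¹ • t) - τ θ₀| * f n t
        ≤ C * k n * ((a n)⁻¹ * ‖t‖) * f n t := h2
      _ = (C * k n / a n) * (‖t‖ * f n t) := by field_simp
  have hIpos : ∀ n, 0 < ∫ t in S n, f n t := by
    intro n
    obtain ⟨B, hB⟩ := hτ_bdd
    have hle : (∫ t in S n, τ (θ₀ + (a n)⁻¹ • t) * f n t) ≤ ∫ t in S n, B * f n t := by
      apply setIntegral_mono_on
      · apply Integrable.mono' ((hf_int n).const_mul B)
        · exact ((hτ_cont.comp (continuous_const.add (continuous_const_smul (a n)⁻¹))).aestronglyMeasurable.mul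
            (hf_int n).aestronglyMeasurable)
        · filter_upwards with t
          rw [Real.norm_eq_abs, abs_mul, abs_of_nonneg (hτ_nonneg _),
            abs_of_nonneg (hf_nonneg n t)]
          exact mul_le_mul_of_nonneg_right (hB _) (hf_nonneg n t)
      · exact (hf_int n).const_mul B
      · exact hSmeas n
      · intro t _
        exact mul_le_mul_of_nonneg_right (hB _) (hf_nonneg n t)
    rw [integral_const_mul] at hle
    have hD := hden_pos n
    by_contra h
    push_neg at h
    have hI0 : (∫ t in S n, f n t) = 0 :=
      le_antisymm h (integral_nonneg fun t => hf_nonneg n t)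
    rw [hI0, mul_zero] at hle
    linarith
  have hJle : ∀ n, (∫ t in S n, ‖t‖ * f n t) ≤ M * ∫ t in S n, f n t := by
    intro n
    have := hmom n
    rw [div_le_iff₀ (hIpos n)] at this
    linarith [this]
  have hNle : ∀ n,
      (∫ t in S n, |τ (θ₀ + (a n)⁻¹ • t) - τ θ₀| * f n t) ≤
        (C * k n / a n) * ∫ t in S n, ‖t‖ * f n t := by
    intro n
    have hcka : 0 ≤ C * k n / a n :=
      div_nonneg (mul_nonneg hC.le (hk_pos n).le) (ha_pos n).le
    have hint1 : IntegrableOn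
        (fun t => |τ (θ₀ + (a n)⁻¹ • t) - τ θ₀| * f n t) (S n) := by
      apply Integrable.mono' ((hf_mom n).const_mul (C * k n / a n))
      · exact (((hτ_cont.comp (continuous_const.add (continuous_const_smul (a n)⁻¹))).sub continuous_const).abs.aestronglyMeasurable.mul
          (hf_int n).aestronglyMeasurable)
      · refine (ae_restrict_iff' (hSmeas n)).2 ?_
        filter_upwards with t ht
        rw [Real.norm_eq_abs, abs_mul, abs_abs, abs_of_nonneg (hf_nonneg n t)]
        exact hpt n t ht
    calc (∫ t in S n, |τ (θ₀ + (a n)⁻¹ • t) - τ θ₀| * f n t)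
        ≤ ∫ t in S n, (C * k n / a n) * (‖t‖ * f n t) :=
          setIntegral_mono_on hint1 ((hf_mom n).const_mul _) (hSmeas n) (hpt n)
      _ = (C * k n / a n) * ∫ t in S n, ‖t‖ * f n t := integral_const_mul _ _
  have key : ∀ n,
      (∫ t in S n, |τ (θ₀ + (a n)⁻¹ • t) - τ θ₀| * f n t) /
        (∫ t in S n, τ (θ₀ + (a n)⁻¹ • t) * f n t) ≤
      (k n / a n) * C * M *
        ((τ θ₀ * ∫ t in S n, f n t) /
          (∫ t in S n, τ (θ₀ + (a n)⁻¹ • t) * f n t)) / τ θ₀ := by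
    intro n
    set N := ∫ t in S n, |τ (θ₀ + (a n)⁻¹ • t) - τ θ₀| * f n t with hN
    set D := ∫ t in S n, τ (θ₀ + (a n)⁻¹ • t) * f n t with hD
    set I := ∫ t in S n, f n t with hI
    have hDpos : 0 < D := hden_pos n
    have heq : (k n / a n) * C * M * ((τ θ₀ * I) / D) / τ θ₀
        = ((k n / a n) * C * M * I) / D := by
      have hane := (ha_pos n).ne'
      have hDne := hDpos.ne'
      field_simp
    rw [heq, div_le_div_iff_of_pos_right hDpos]
    have hcka : 0 ≤ C * k n / a n :=
      div_nonneg (mul_nonneg hC.le (hk_pos n).le) (ha_pos n).le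
    have h1 := hNle n
    have h2 := mul_le_mul_of_nonneg_left (hJle n) hcka
    calc N ≤ (C * k n / a n) * ∫ t in S n, ‖t‖ * f n t := h1
      _ ≤ (C * k n / a n) * (M * I) := h2
      _ = (k n / a n) * C * M * I := by ring
  refine ⟨key, ?_⟩
  intro hka ⟨M₂, hM₂⟩
  apply squeeze_zero
  · intro n
    apply div_nonneg _ (hden_pos n).le
    apply integral_nonneg
    intro t
    exact mul_nonneg (abs_nonneg _) (hf_nonneg n t)
  · intro n
    calc (∫ t in S n, |τ (θ₀ + (a n)⁻¹ • t) - τ θ₀| * f n t) /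
          (∫ t in S n, τ (θ₀ + (a n)⁻¹ • t) * f n t)
        ≤ (k n / a n) * C * M *
            ((τ θ₀ * ∫ t in S n, f n t) /
              (∫ t in S n, τ (θ₀ + (a n)⁻¹ • t) * f n t)) / τ θ₀ := key n
      _ ≤ (k n / a n) * (C * M * M₂ / τ θ₀) := by
          have hka0 : 0 ≤ k n / a n := div_nonneg (hk_pos n).le (ha_pos n).le
          have hφ := hM₂ n
          have : (k n / a n) * C * M *
              ((τ θ₀ * ∫ t in S n, f n t) /
                (∫ t in S n, τ (θ₀ + (a n)⁻¹ • t) * f n t)) ≤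
              (k n / a n) * C * M * M₂ := by
            apply mul_le_mul_of_nonneg_left hφ
            positivity
          calc (k n / a n) * C * M *
              ((τ θ₀ * ∫ t in S n, f n t) /
                (∫ t in S n, τ (θ₀ + (a n)⁻¹ • t) * f n t)) / τ θ₀
              ≤ (k n / a n) * C * M * M₂ / τ θ₀ := by
                exact div_le_div_of_nonneg_right this hτ₀.le
            _ = (k n / a n) * (C * M * M₂ / τ θ₀) := by ring
  · have := hka.mul_const (C * M * M₂ / τ θ₀)
    simpa using this
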